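/- arXiv:2401.00089 — 6 statements merged into one kernel-verified Lean document; each statement's English description precedes it below -/
import Mathlib

section
/- For all positive integers m and all 1 ≤ r, s ≤ m, the number T_m(r,s) of subsets I of {1,...,m} with #I = r having an odd number of elements ≤ s satisfies T_m(r,s) = ∑_{t=1}^{m} binom(m-t, r-t) · (-2)^{t-1} · binom(s, t) (as integers). -/
/-- `T m r s` is the number of subsets `I ⊆ {1,…,m}` with `#I = r` such that
`#{i ∈ I : i ≤ s}` is odd. -/
def T (m r s : ℕ) : ℕ :=
  ((Finset.powersetCard r (Finset.Icc 1 m)).filter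
    (fun I => Odd ((I.filter (fun i => i ≤ s)).card))).card

open Finset Polynomial

lemma fiber_card (m r s j : ℕ) (hsm : s ≤ m) (hj : j ≤ r) :
    ((Finset.powersetCard r (Finset.Icc 1 m)).filter
      (fun I => (I.filter (fun i => i ≤ s)).card = j)).card
      = s.choose j * (m - s).choose (r - j) := by
  have hcard : ((Finset.Icc 1 s).powersetCard j ×ˢ
      (Finset.Icc (s+1) m).powersetCard (r - j)).card
      = s.choose j * (m - s).choose (r - j) := by
    rw [Finset.card_product, Finset.card_powersetCard, Finset.card_powersetCard,
      Nat.card_Icc, Nat.card_Icc]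
    congr 2 <;> omega
  rw [← hcard]
  refine Finset.card_nbij' (fun I => (I.filter (fun i => i ≤ s), I.filter (fun i => ¬ i ≤ s)))
    (fun p => p.1 ∪ p.2) ?_ ?_ ?_ ?_
  · intro I hI
    simp only [Finset.mem_coe, Finset.mem_filter, Finset.mem_powersetCard] at hI
    obtain ⟨⟨hsub, hcardI⟩, hfj⟩ := hI
    simp only [Finset.mem_coe, Finset.mem_product, Finset.mem_powersetCard]
    have hIm : ∀ x ∈ I, 1 ≤ x ∧ x ≤ m := by
      intro x hx; have := hsub hx; simp only [Finset.mem_Icc] at this; exact this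
    refine ⟨⟨?_, hfj⟩, ?_, ?_⟩
    · intro x hx
      simp only [Finset.mem_filter] at hx
      simp only [Finset.mem_Icc]
      exact ⟨(hIm x hx.1).1, hx.2⟩
    · intro x hx
      simp only [Finset.mem_filter] at hx
      simp only [Finset.mem_Icc]
      exact ⟨by omega, (hIm x hx.1).2⟩
    · have := Finset.card_filter_add_card_filter_not
        (s := I) (p := fun i => i ≤ s)
      omega
  · intro p hp
    simp only [Finset.mem_coe, Finset.mem_product, Finset.mem_powersetCard] at hp
    obtain ⟨⟨h1sub, h1c⟩, h2sub, h2c⟩ := hp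
    have hdisj : Disjoint p.1 p.2 := by
      rw [Finset.disjoint_left]
      intro x hx1 hx2
      have := h1sub hx1; have := h2sub hx2
      simp only [Finset.mem_Icc] at *
      omega
    simp only [Finset.mem_coe, Finset.mem_filter, Finset.mem_powersetCard]
    refine ⟨⟨?_, ?_⟩, ?_⟩
    · intro x hx
      rcases Finset.mem_union.mp hx with h | h
      · have := h1sub h; simp only [Finset.mem_Icc] at *; omega
      · have := h2sub h; simp only [Finset.mem_Icc] at *; omega
    · rw [Finset.card_union_of_disjoint hdisj, h1c, h2c]; omega
    · rw [Finset.filter_union]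
      rw [Finset.filter_true_of_mem, Finset.filter_false_of_mem]
      · simp [h1c]
      · intro x hx; have := h2sub hx; simp only [Finset.mem_Icc] at this; omega
      · intro x hx; have := h1sub hx; simp only [Finset.mem_Icc] at this; omega
  · intro I hI
    exact Finset.filter_union_filter_not_eq _ I
  · intro p hp
    simp only [Finset.mem_coe, Finset.mem_product, Finset.mem_powersetCard] at hp
    obtain ⟨⟨h1sub, h1c⟩, h2sub, h2c⟩ := hp
    have e1 : (p.1 ∪ p.2).filter (fun i => i ≤ s) = p.1 := by
      rw [Finset.filter_union, Finset.filter_true_of_mem, Finset.filter_false_of_mem]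
      · simp
      · intro x hx; have := h2sub hx; simp only [Finset.mem_Icc] at this; omega
      · intro x hx; have := h1sub hx; simp only [Finset.mem_Icc] at this; omega
    have e2 : (p.1 ∪ p.2).filter (fun i => ¬ i ≤ s) = p.2 := by
      rw [Finset.filter_union, Finset.filter_false_of_mem, Finset.filter_true_of_mem]
      · simp
      · intro x hx; have := h2sub hx; simp only [Finset.mem_Icc] at this; omega
      · intro x hx; have := h1sub hx; simp only [Finset.mem_Icc] at this; omega
    simp only []
    rw [e1, e2]

lemma T_sum (m r s : ℕ) (hsm : s ≤ m) :
    T m r s = ∑ j ∈ Finset.range (r+1),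
      if Odd j then s.choose j * (m - s).choose (r - j) else 0 := by
  unfold T
  rw [Finset.card_eq_sum_card_fiberwise
    (f := fun I : Finset ℕ => (I.filter (fun i => i ≤ s)).card) (t := Finset.range (r+1))]
  · apply Finset.sum_congr rfl
    intro j hj
    rw [Finset.mem_range] at hj
    rw [Finset.filter_filter]
    by_cases hodd : Odd j
    · rw [if_pos hodd, ← fiber_card m r s j hsm (by omega)]
      congr 1
      apply Finset.filter_congr
      intro I _
      constructor
      · rintro ⟨_, h⟩; exact h
      · intro h; exact ⟨h ▸ hodd, h⟩
    · rw [if_neg hodd]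
      rw [Finset.filter_false_of_mem, Finset.card_empty]
      rintro I _ ⟨h1, h2⟩
      exact hodd (h2 ▸ h1)
  · intro I hI
    simp only [Finset.mem_coe, Finset.mem_filter, Finset.mem_powersetCard] at hI
    simp only [Finset.mem_coe, Finset.mem_range]
    have := Finset.card_filter_le I (fun i => i ≤ s)
    omega

lemma coeff_one_sub_X_pow (n k : ℕ) :
    ((1 - X : ℤ[X]) ^ n).coeff k = (-1) ^ k * n.choose k := by
  have h : ((1 : ℤ[X]) - X) = (-1) * (X + C (-1)) := by
    simp only [map_neg, map_one]; ring
  rw [h, mul_pow, show ((-1 : ℤ[X])) ^ n = C ((-1) ^ n) by simp, coeff_C_mul,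
    coeff_X_add_C_pow]
  rcases le_or_gt k n with hkn | hkn
  · rw [← mul_assoc, ← pow_add, show n + (n - k) = 2 * (n - k) + k by omega,
      pow_add, pow_mul]
    simp
  · simp [Nat.choose_eq_zero_of_lt hkn]

lemma polyid (m s : ℕ) (hsm : s ≤ m) :
    ((1 - X) ^ s * (1 + X) ^ (m - s) : ℤ[X]) =
      ∑ t ∈ Finset.range (s+1),
        C ((s.choose t : ℤ) * (-2) ^ t) * ((1 + X) ^ (m - t) * X ^ t) := by
  have h1 : ((1 : ℤ[X]) - X) = (-2 * X) + (1 + X) := by ring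
  rw [h1, add_pow, Finset.sum_mul]
  apply Finset.sum_congr rfl
  intro t ht
  rw [Finset.mem_range] at ht
  have h2 : m - t = (m - s) + (s - t) := by omega
  rw [h2, pow_add]
  simp only [map_mul, map_pow, map_neg, map_ofNat, C_eq_natCast]
  ring

lemma keyA (m r s : ℕ) (hsm : s ≤ m) :
    ∑ j ∈ Finset.range (r+1), (-1 : ℤ) ^ j * s.choose j * (m - s).choose (r - j)
      = ∑ t ∈ Finset.range (m+1),
          (if t ≤ r then ((m - t).choose (r - t) : ℤ) else 0) * (-2) ^ t * s.choose t := by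
  have h := congrArg (fun p : ℤ[X] => p.coeff r) (polyid m s hsm)
  rw [show (((1 - X) ^ s * (1 + X) ^ (m - s) : ℤ[X]).coeff r) =
      ∑ ij ∈ Finset.HasAntidiagonal.antidiagonal r,
        ((1 - X : ℤ[X]) ^ s).coeff ij.1 * (((1 + X : ℤ[X])) ^ (m - s)).coeff ij.2
    from coeff_mul _ _ r] at h
  rw [finset_sum_coeff] at h
  simp only [coeff_C_mul, coeff_mul_X_pow'] at h
  rw [Finset.Nat.sum_antidiagonal_eq_sum_range_succ_mk] at h
  simp only [coeff_one_sub_X_pow, coeff_one_add_X_pow] at h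
  calc ∑ j ∈ Finset.range (r+1), (-1 : ℤ) ^ j * (s.choose j : ℤ) * ((m - s).choose (r - j) : ℤ)
      = ∑ t ∈ Finset.range (s+1),
          (s.choose t : ℤ) * (-2) ^ t *
            (if t ≤ r then ((m - t).choose (r - t) : ℤ) else 0) := h
    _ = ∑ t ∈ Finset.range (m+1),
          (if t ≤ r then ((m - t).choose (r - t) : ℤ) else 0) * (-2) ^ t * (s.choose t : ℤ) := by
        rw [Finset.sum_subset (Finset.range_subset_range.mpr (by omega : s + 1 ≤ m + 1))]
        · apply Finset.sum_congr rfl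
          intro t _
          ring
        · intro t _ ht
          rw [Finset.mem_range, not_lt] at ht
          rw [Nat.choose_eq_zero_of_lt (by omega : s < t)]
          simp

theorem stmt_4 (m r s : ℕ) (hr1 : 1 ≤ r) (hrm : r ≤ m) (hs1 : 1 ≤ s) (hsm : s ≤ m) :
    (T m r s : ℤ) =
      ∑ t ∈ Finset.Icc 1 m,
        (if t ≤ r then ((m - t).choose (r - t) : ℤ) else 0) *
          (-2) ^ (t - 1) * (s.choose t : ℤ) := by
  have hV : (m.choose r : ℤ) =
      ∑ j ∈ Finset.range (r+1), (s.choose j : ℤ) * ((m - s).choose (r - j) : ℤ) := by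
    have := Nat.add_choose_eq s (m - s) r
    rw [Nat.add_sub_cancel' hsm] at this
    rw [this, Finset.Nat.sum_antidiagonal_eq_sum_range_succ_mk]
    push_cast
    rfl
  have hT : (T m r s : ℤ) = ∑ j ∈ Finset.range (r+1),
      if Odd j then (s.choose j : ℤ) * ((m - s).choose (r - j) : ℤ) else 0 := by
    rw [T_sum m r s hsm]
    push_cast
    apply Finset.sum_congr rfl
    intros; split <;> simp
  have h2T : 2 * (T m r s : ℤ) = (m.choose r : ℤ)
      - ∑ j ∈ Finset.range (r+1), (-1 : ℤ) ^ j * s.choose j * (m - s).choose (r - j) := by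
    rw [hT, hV, Finset.mul_sum, ← Finset.sum_sub_distrib]
    apply Finset.sum_congr rfl
    intro j _
    rcases Nat.even_or_odd j with he | ho
    · rw [if_neg (by simp [Nat.not_odd_iff_even.mpr he]), he.neg_one_pow]
      ring
    · rw [if_pos ho, ho.neg_one_pow]
      ring
  set S := ∑ t ∈ Finset.range (m+1),
      (if t ≤ r then ((m - t).choose (r - t) : ℤ) else 0) * (-2) ^ t * s.choose t with hS
  have hrange : Finset.range (m+1) = insert 0 (Finset.Icc 1 m) := by
    ext x; simp only [Finset.mem_range, Finset.mem_insert, Finset.mem_Icc]; omega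
  have hSsplit : S = (m.choose r : ℤ) - 2 * ∑ t ∈ Finset.Icc 1 m,
      (if t ≤ r then ((m - t).choose (r - t) : ℤ) else 0) * (-2) ^ (t - 1) * (s.choose t : ℤ) := by
    rw [hS, hrange, Finset.sum_insert (by simp)]
    have h0 : (if 0 ≤ r then ((m - 0).choose (r - 0) : ℤ) else 0) * (-2) ^ 0 * (s.choose 0 : ℤ)
        = (m.choose r : ℤ) := by simp
    rw [h0]
    have : ∀ t ∈ Finset.Icc 1 m,
        (if t ≤ r then ((m - t).choose (r - t) : ℤ) else 0) * (-2) ^ t * (s.choose t : ℤ)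
        = (-2 : ℤ) * ((if t ≤ r then ((m - t).choose (r - t) : ℤ) else 0) * (-2) ^ (t - 1)
            * (s.choose t : ℤ)) := by
      intro t ht
      rw [Finset.mem_Icc] at ht
      have : (-2 : ℤ) ^ t = (-2) * (-2) ^ (t - 1) := by
        rw [← pow_succ']
        congr 1
        omega
      rw [this]
      ring
    rw [Finset.sum_congr rfl this, ← Finset.mul_sum]
    ring
  have hAS := keyA m r s hsm
  have : 2 * (T m r s : ℤ) = 2 * ∑ t ∈ Finset.Icc 1 m,
      (if t ≤ r then ((m - t).choose (r - t) : ℤ) else 0) * (-2) ^ (t - 1) * (s.choose t : ℤ) := by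
    rw [h2T, hAS, ← hS]
    omega
  exact mul_left_cancel₀ two_ne_zero this
end

section
/- Let m be a positive integer and define the m×m integer matrix T_m by (T_m)_{r,s} = #{I ⊆ {1,...,m} : #I = r ∧ #{i ∈ I : i ≤ s} is odd}. Then det(T_m) = (-2)^{binom(m,2)}; in particular T_m is invertible over ℚ. -/
/-- The matrix `T_m` over the integers, with rows/cols indexed by `Fin m`
(the `(r,s)` entry of `T_m` for `r,s ∈ {1,…,m}` corresponds to index `(r-1,s-1)`). -/
def Tm (m : ℕ) : Matrix (Fin m) (Fin m) ℤ :=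
  Matrix.of fun r s => (T m (r + 1) (s + 1) : ℤ)

open Polynomial Finset

lemma coeff_prod_one_add (a : ℕ → ℤ) (t : Finset ℕ) :
    ∀ r : ℕ, (∏ i ∈ t, (1 + C (a i) * X)).coeff r
      = ∑ I ∈ t.powersetCard r, ∏ i ∈ I, a i := by
  induction t using Finset.induction with
  | empty =>
    intro r
    cases r with
    | zero => simp
    | succ r =>
      rw [Finset.prod_empty, Polynomial.coeff_one]
      rw [Finset.powersetCard_eq_empty.mpr (by simp)]
      simp
  | @insert x t' hx ih =>
    intro r
    rw [Finset.prod_insert hx]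
    have hexp : (1 + C (a x) * X) * (∏ i ∈ t', (1 + C (a i) * X))
        = (∏ i ∈ t', (1 + C (a i) * X)) + C (a x) * (X * ∏ i ∈ t', (1 + C (a i) * X)) := by
      ring
    rw [hexp]
    cases r with
    | zero =>
      rw [Polynomial.coeff_add, Polynomial.coeff_C_mul, mul_comm X, Polynomial.coeff_mul_X_zero]
      rw [Finset.powersetCard_zero, ih 0, Finset.powersetCard_zero]
      simp
    | succ r =>
      rw [Polynomial.coeff_add, Polynomial.coeff_C_mul, Polynomial.coeff_X_mul]
      rw [Finset.powersetCard_succ_insert hx]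
      have hdisj : Disjoint (t'.powersetCard (r+1)) ((t'.powersetCard r).image (insert x)) := by
        rw [Finset.disjoint_left]
        intro I hI hI'
        rw [Finset.mem_powersetCard] at hI
        obtain ⟨J, hJ, rfl⟩ := Finset.mem_image.mp hI'
        exact hx (hI.1 (Finset.mem_insert_self x J))
      rw [Finset.sum_union hdisj]
      have himg : ∑ I ∈ (t'.powersetCard r).image (insert x), ∏ i ∈ I, a i
          = a x * ∑ I ∈ t'.powersetCard r, ∏ i ∈ I, a i := by
        rw [Finset.sum_image ?_, Finset.mul_sum]
        · refine Finset.sum_congr rfl fun I hI => ?_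
          rw [Finset.mem_powersetCard] at hI
          rw [Finset.prod_insert fun h => hx (hI.1 h)]
        · intro I hI J hJ hIJ
          rw [Finset.mem_coe, Finset.mem_powersetCard] at hI hJ
          have hxI : x ∉ I := fun h => hx (hI.1 h)
          have hxJ : x ∉ J := fun h => hx (hJ.1 h)
          rw [← Finset.erase_insert hxI, ← Finset.erase_insert hxJ, hIJ]
      rw [himg, ih (r+1), ih r]

lemma coeff_eq_choose_sub_two_T (m s : ℕ) (hs : s ≤ m) (r : ℕ) :
    ((1 - X : ℤ[X])^s * (1 + X)^(m - s)).coeff r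
      = (m.choose r : ℤ) - 2 * T m r s := by
  set a : ℕ → ℤ := fun i => if i ≤ s then -1 else 1 with ha
  have hprod : ((1 - X : ℤ[X])^s * (1 + X)^(m - s))
      = ∏ i ∈ Finset.Icc 1 m, (1 + C (a i) * X) := by
    rw [← Finset.prod_filter_mul_prod_filter_not (Finset.Icc 1 m) (fun i => i ≤ s)]
    have h1 : (Finset.Icc 1 m).filter (fun i => i ≤ s) = Finset.Icc 1 s := by
      ext i; simp only [Finset.mem_Icc, Finset.mem_filter]; omega
    have h2 : (Finset.Icc 1 m).filter (fun i => ¬ i ≤ s) = Finset.Icc (s+1) m := by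
      ext i; simp only [Finset.mem_Icc, Finset.mem_filter]; omega
    rw [h1, h2]
    have e1 : ∏ i ∈ Finset.Icc 1 s, (1 + C (a i) * X) = (1 - X : ℤ[X])^s := by
      rw [Finset.prod_congr rfl (g := fun _ => (1:ℤ[X]) - X) fun i hi => ?_,
        Finset.prod_const, Nat.card_Icc]
      · norm_num
      · rw [Finset.mem_Icc] at hi
        rw [ha]; simp only [hi.2, if_pos]
        simp [sub_eq_add_neg]
    have e2 : ∏ i ∈ Finset.Icc (s+1) m, (1 + C (a i) * X) = (1 + X : ℤ[X])^(m - s) := by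
      rw [Finset.prod_congr rfl (g := fun _ => (1:ℤ[X]) + X) fun i hi => ?_,
        Finset.prod_const, Nat.card_Icc]
      · congr 1; omega
      · rw [Finset.mem_Icc] at hi
        rw [ha]; simp only [show ¬ i ≤ s by omega, if_neg, if_false]
        simp
    rw [e1, e2]
  rw [hprod, coeff_prod_one_add]
  rw [← Finset.sum_filter_add_sum_filter_not ((Finset.Icc 1 m).powersetCard r)
    (fun I => Odd ((I.filter (fun i => i ≤ s)).card))]
  have hval : ∀ I : Finset ℕ, ∏ i ∈ I, a i
      = (-1 : ℤ)^((I.filter (fun i => i ≤ s)).card) := by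
    intro I
    rw [← Finset.prod_filter_mul_prod_filter_not I (fun i => i ≤ s)]
    have e1 : ∏ i ∈ I.filter (fun i => i ≤ s), a i
        = (-1 : ℤ)^((I.filter (fun i => i ≤ s)).card) := by
      rw [Finset.prod_congr rfl (g := fun _ => (-1:ℤ)) fun i hi => ?_, Finset.prod_const]
      rw [Finset.mem_filter] at hi
      rw [ha]; simp [hi.2]
    have e2 : ∏ i ∈ I.filter (fun i => ¬ i ≤ s), a i = 1 := by
      rw [Finset.prod_congr rfl (g := fun _ => (1:ℤ)) fun i hi => ?_, Finset.prod_const, one_pow]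
      rw [Finset.mem_filter] at hi
      rw [ha]; simp [hi.2]
    rw [e1, e2, mul_one]
  have hodd : ∑ I ∈ ((Finset.Icc 1 m).powersetCard r).filter
      (fun I => Odd ((I.filter (fun i => i ≤ s)).card)), ∏ i ∈ I, a i
      = -(T m r s : ℤ) := by
    rw [Finset.sum_congr rfl (g := fun _ => (-1:ℤ)) fun I hI => ?_, Finset.sum_const]
    · rw [T]; push_cast; ring
    · rw [Finset.mem_filter] at hI
      rw [hval I, Odd.neg_one_pow hI.2]
  have heven : ∑ I ∈ ((Finset.Icc 1 m).powersetCard r).filter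
      (fun I => ¬ Odd ((I.filter (fun i => i ≤ s)).card)), ∏ i ∈ I, a i
      = (m.choose r : ℤ) - T m r s := by
    rw [Finset.sum_congr rfl (g := fun _ => (1:ℤ)) fun I hI => ?_, Finset.sum_const]
    · have hcards : (((Finset.Icc 1 m).powersetCard r).filter
          (fun I => ¬ Odd ((I.filter (fun i => i ≤ s)).card))).card
          = ((Finset.Icc 1 m).powersetCard r).card - T m r s := by
        have := Finset.card_filter_add_card_filter_not
          (s := (Finset.Icc 1 m).powersetCard r)
          (p := fun I => Odd ((I.filter (fun i => i ≤ s)).card))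
        rw [T]; omega
      rw [hcards, Finset.card_powersetCard, Nat.card_Icc]
      have hT : T m r s ≤ ((Finset.Icc 1 m).powersetCard r).card := by
        rw [T]; exact Finset.card_filter_le _ _
      rw [Finset.card_powersetCard, Nat.card_Icc] at hT
      simp only [Nat.add_sub_cancel] at *
      rw [nsmul_eq_mul, mul_one]; omega
    · rw [Finset.mem_filter] at hI
      rw [hval I, (Nat.not_odd_iff_even.mp hI.2).neg_one_pow]
  rw [hodd, heven]
  ring

noncomputable def Kr (n : ℕ) : Matrix (Fin (n+1)) (Fin (n+1)) ℤ :=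
  Matrix.of fun r s => ((1 - X : ℤ[X])^(s:ℕ) * (1 + X)^(n - s)).coeff r

lemma poly_key (n s : ℕ) (hs : s ≤ n) :
    ((1 - X : ℤ[X])^s * (1 + X)^(n + 1 - s)) - (1 - X)^(s+1) * (1 + X)^(n - s)
      = C 2 * (X * ((1 - X)^s * (1 + X)^(n - s))) := by
  have h : n + 1 - s = (n - s) + 1 := by omega
  have c2 : (C (2:ℤ) : ℤ[X]) = 2 := by norm_num
  rw [h, c2]
  ring

lemma T_zero (m r : ℕ) : T m r 0 = 0 := by
  unfold T
  rw [Finset.card_eq_zero, Finset.filter_eq_empty_iff]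
  intro I hI
  rw [Finset.mem_powersetCard] at hI
  have h : I.filter (fun i => i ≤ 0) = ∅ := by
    rw [Finset.filter_eq_empty_iff]
    intro i hi
    have := hI.1 hi
    rw [Finset.mem_Icc] at this
    omega
  rw [h]
  simp

lemma Tdiff (n r s : ℕ) (hs : s ≤ n) :
    (T (n+1) (r+1) (s+1) : ℤ) - T (n+1) (r+1) s
      = ((1 - X : ℤ[X])^s * (1 + X)^(n - s)).coeff r := by
  have h1 := coeff_eq_choose_sub_two_T (n+1) s (by omega) (r+1)
  have h2 := coeff_eq_choose_sub_two_T (n+1) (s+1) (by omega) (r+1)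
  have e : n + 1 - (s+1) = n - s := by omega
  rw [e] at h2
  have h4 := congrArg (fun p => Polynomial.coeff p (r+1)) (poly_key n s hs)
  simp only [Polynomial.coeff_sub, Polynomial.coeff_C_mul, Polynomial.coeff_X_mul] at h4
  rw [h1, h2] at h4
  linarith

def Esub (n : ℕ) : Matrix (Fin n) (Fin n) ℤ :=
  Matrix.of fun t s => if (t:ℕ) + 1 = (s:ℕ) then 1 else 0

lemma det_one_sub_Esub (n : ℕ) : (1 - Esub n).det = 1 := by
  rw [Matrix.det_of_upperTriangular (h := ?_)]
  · rw [Finset.prod_congr rfl (g := fun _ => (1:ℤ)) fun i _ => ?_, Finset.prod_const, one_pow]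
    simp [Esub, Matrix.one_apply, Matrix.sub_apply]
  · intro i j hij
    have hij' : (j:ℕ) < (i:ℕ) := hij
    simp only [Matrix.sub_apply, Esub, Matrix.of_apply, Matrix.one_apply]
    rw [if_neg (by omega : ¬ (i:ℕ) + 1 = (j:ℕ)), if_neg (by
      intro h; rw [h] at hij'; omega)]
    ring

lemma AE0 (n : ℕ) (A : Matrix (Fin (n+1)) (Fin (n+1)) ℤ) (r : Fin (n+1)) :
    (A * Esub (n+1)) r 0 = 0 := by
  rw [Matrix.mul_apply]
  apply Finset.sum_eq_zero
  intro t _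
  simp [Esub]

lemma AEsucc (n : ℕ) (A : Matrix (Fin (n+1)) (Fin (n+1)) ℤ) (r : Fin (n+1)) (j : Fin n) :
    (A * Esub (n+1)) r j.succ = A r j.castSucc := by
  rw [Matrix.mul_apply]
  rw [Finset.sum_eq_single j.castSucc]
  · simp [Esub]
  · intro t _ ht
    rw [Esub, Matrix.of_apply, if_neg, mul_zero]
    intro h
    apply ht
    have : (t : ℕ) = (j.castSucc : ℕ) := by
      simp only [Fin.coe_castSucc]
      simp only [Fin.val_succ] at h
      omega
    exact Fin.ext this
  · intro h
    exact absurd (Finset.mem_univ _) h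

lemma detKr : ∀ n, (Kr n).det = (-2)^((n+1).choose 2) := by
  intro n
  induction n with
  | zero =>
    rw [Matrix.det_fin_one]
    simp [Kr]
  | succ n ih =>
    have hdet : (Kr (n+1)).det = (Kr (n+1) * (1 - Esub (n+2))).det := by
      rw [Matrix.det_mul, det_one_sub_Esub, mul_one]
    set M := Kr (n+1) * (1 - Esub (n+2)) with hM
    have hM00 : M 0 0 = 1 := by
      rw [hM, Matrix.mul_sub, Matrix.mul_one, Matrix.sub_apply, AE0, sub_zero]
      simp [Kr, Polynomial.coeff_zero_eq_eval_zero]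
    have hM0s : ∀ j : Fin (n+1), M 0 j.succ = 0 := by
      intro j
      rw [hM, Matrix.mul_sub, Matrix.mul_one, Matrix.sub_apply, AEsucc]
      have hj : (j:ℕ) ≤ n := Nat.lt_succ_iff.mp j.isLt
      have h4 := congrArg (fun p => Polynomial.coeff p 0) (poly_key n j hj)
      simp only [Polynomial.coeff_sub, Polynomial.coeff_C_mul, mul_comm X,
        Polynomial.coeff_mul_X_zero, mul_zero] at h4
      have e : n + 1 - ((j:ℕ)+1) = n - (j:ℕ) := by omega
      simp only [Kr, Matrix.of_apply, Fin.val_succ, Fin.coe_castSucc, Fin.val_zero, e]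
      omega
    have hsub : ∀ (i j : Fin (n+1)), M i.succ j.succ = (-2 : ℤ) * Kr n i j := by
      intro i j
      rw [hM, Matrix.mul_sub, Matrix.mul_one, Matrix.sub_apply, AEsucc]
      have hj : (j:ℕ) ≤ n := Nat.lt_succ_iff.mp j.isLt
      have h4 := congrArg (fun p => Polynomial.coeff p ((i:ℕ)+1)) (poly_key n j hj)
      simp only [Polynomial.coeff_sub, Polynomial.coeff_C_mul,
        Polynomial.coeff_X_mul] at h4
      have e : n + 1 - ((j:ℕ)+1) = n - (j:ℕ) := by omega
      simp only [Kr, Matrix.of_apply, Fin.val_succ, Fin.coe_castSucc, e] at h4 ⊢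
      linarith
    have hexp : M.det = (M.submatrix Fin.succ Fin.succ).det := by
      rw [Matrix.det_succ_row_zero, Fin.sum_univ_succ]
      rw [Finset.sum_eq_zero (fun i _ => by rw [hM0s i]; ring)]
      simp [hM00, Fin.succAbove_zero]
    have hsm : M.submatrix Fin.succ Fin.succ = (-2 : ℤ) • Kr n := by
      ext i j
      rw [Matrix.submatrix_apply, hsub, Matrix.smul_apply, smul_eq_mul]
    rw [hdet, hexp, hsm, Matrix.det_smul, ih]
    have hcard : Fintype.card (Fin (n+1)) = n + 1 := Fintype.card_fin _
    rw [hcard]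
    rw [show (n+1+1).choose 2 = (n+1) + (n+1).choose 2 by
      rw [Nat.choose_succ_succ (n+1) 1, Nat.choose_one_right]]
    rw [pow_add]
    ring

lemma TmE (n : ℕ) : Tm (n+1) * (1 - Esub (n+1)) = Kr n := by
  ext r s
  rw [Matrix.mul_sub, Matrix.mul_one, Matrix.sub_apply]
  refine Fin.cases ?_ (fun j => ?_) s
  · rw [AE0, sub_zero]
    have h := Tdiff n r 0 (Nat.zero_le n)
    rw [T_zero] at h
    simp only [Tm, Kr, Matrix.of_apply, Fin.val_zero, Nat.sub_zero] at h ⊢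
    rw [Nat.cast_zero, sub_zero] at h
    exact h
  · rw [AEsucc]
    have hj : (j:ℕ) + 1 ≤ n := j.isLt
    have h := Tdiff n r ((j:ℕ)+1) hj
    simp only [Tm, Kr, Matrix.of_apply, Fin.val_succ, Fin.coe_castSucc]
    exact h

theorem stmt_5 (m : ℕ) (hm : 1 ≤ m) :
    (Tm m).det = (-2) ^ (m.choose 2) ∧
      IsUnit ((Tm m).map ((↑) : ℤ → ℚ)) := by
  obtain ⟨n, rfl⟩ : ∃ n, m = n + 1 := ⟨m - 1, by omega⟩
  have hdet : (Tm (n+1)).det = (-2) ^ ((n+1).choose 2) := by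
    have h1 : (Tm (n+1)).det * (1 - Esub (n+1)).det = (Kr n).det := by
      rw [← Matrix.det_mul, TmE]
    rw [det_one_sub_Esub, mul_one] at h1
    rw [h1, detKr]
  refine ⟨hdet, ?_⟩
  rw [Matrix.isUnit_iff_isUnit_det]
  have heq : (Tm (n+1)).map ((↑) : ℤ → ℚ) = (Int.castRingHom ℚ).mapMatrix (Tm (n+1)) := rfl
  rw [heq, ← RingHom.map_det, hdet]
  apply isUnit_iff_ne_zero.mpr
  simp only [map_pow, map_neg, map_ofNat]
  exact pow_ne_zero _ (by norm_num)
end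

section
/- For integers 1 ≤ r ≤ m, ∑_{t=1}^{m} binom(m-t, r-t) · (-2)^{t-1} · binom(m, t) equals binom(m, r) if r is odd and 0 if r is even. -/
theorem stmt_9 (m r : ℕ) (hr1 : 1 ≤ r) (hrm : r ≤ m) :
    (∑ t ∈ Finset.Icc 1 m,
        (if t ≤ r then ((m - t).choose (r - t) : ℤ) else 0) *
          (-2) ^ (t - 1) * (m.choose t : ℤ)) =
      if Odd r then (m.choose r : ℤ) else 0 := by
  have key : ∀ t ∈ Finset.Icc 1 m,
      (if t ≤ r then ((m - t).choose (r - t) : ℤ) else 0) *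
          (-2) ^ (t - 1) * (m.choose t : ℤ)
      = (m.choose r : ℤ) * ((r.choose t : ℤ) * (-2) ^ (t - 1)) := by
    intro t ht
    by_cases h : t ≤ r
    · simp only [if_pos h]
      have h2 : ((m - t).choose (r - t) : ℤ) * (m.choose t : ℤ)
          = (m.choose r : ℤ) * (r.choose t : ℤ) := by
        rw [← Nat.cast_mul, ← Nat.cast_mul, mul_comm ((m-t).choose (r-t)),
          ← Nat.choose_mul (n := m) h]
      linear_combination (-2:ℤ)^(t-1) * h2
    · simp [if_neg h, Nat.choose_eq_zero_of_lt (lt_of_not_ge h)]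
  rw [Finset.sum_congr rfl key, ← Finset.mul_sum]
  have hS : (-2 : ℤ) * ∑ t ∈ Finset.Icc 1 m, (r.choose t : ℤ) * (-2) ^ (t - 1)
      = (-1) ^ r - 1 := by
    rw [Finset.mul_sum]
    have step : ∀ t ∈ Finset.Icc 1 m, (-2:ℤ) * ((r.choose t : ℤ) * (-2) ^ (t - 1))
        = (r.choose t : ℤ) * (-2) ^ t := by
      intro t ht
      obtain ⟨h1, _⟩ := Finset.mem_Icc.mp ht
      obtain ⟨s, rfl⟩ := Nat.exists_eq_add_of_le h1
      rw [Nat.add_sub_cancel_left, pow_add]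
      ring
    rw [Finset.sum_congr rfl step]
    have hpow : ((-1 : ℤ)) ^ r = ∑ k ∈ Finset.range (r + 1),
        (r.choose k : ℤ) * (-2) ^ k := by
      have h := add_pow (-2 : ℤ) 1 r
      norm_num at h
      rw [h]
      exact Finset.sum_congr rfl fun k _ => by ring
    have hsub : ∑ k ∈ Finset.range (r + 1), (r.choose k : ℤ) * (-2) ^ k
        = ∑ k ∈ Finset.range (m + 1), (r.choose k : ℤ) * (-2) ^ k := by
      apply Finset.sum_subset (Finset.range_subset_range.mpr (by omega))
      intro x _ hx
      have : r < x := by simp only [Finset.mem_range] at hx ⊢; omega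
      simp [Nat.choose_eq_zero_of_lt this]
    have hIcc : ∑ k ∈ Finset.range (m + 1), (r.choose k : ℤ) * (-2) ^ k
        = 1 + ∑ t ∈ Finset.Icc 1 m, (r.choose t : ℤ) * (-2) ^ t := by
      rw [Finset.sum_range_succ' (fun k => (r.choose k : ℤ) * (-2) ^ k) m,
        show Finset.Icc 1 m = Finset.Ico 1 (m+1) by rfl, Finset.sum_Ico_eq_sum_range]
      simp [add_comm]
    have := hpow.trans (hsub.trans hIcc)
    linarith
  rcases Nat.even_or_odd r with he | ho
  · rw [if_neg (Nat.not_odd_iff_even.mpr he)]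
    have h1 : ((-1:ℤ))^r = 1 := he.neg_one_pow
    have : ∑ t ∈ Finset.Icc 1 m, (r.choose t : ℤ) * (-2) ^ (t - 1) = 0 := by
      rw [h1] at hS; linarith
    rw [this, mul_zero]
  · rw [if_pos ho]
    have h1 : ((-1:ℤ))^r = -1 := ho.neg_one_pow
    have : ∑ t ∈ Finset.Icc 1 m, (r.choose t : ℤ) * (-2) ^ (t - 1) = 1 := by
      rw [h1] at hS; linarith
    rw [this, mul_one]
end

section
/- Let α_1 ≤ ... ≤ α_m and β_1, ..., β_n be real numbers with no α_i equal to any β_j, and suppose every β_j > α_1. For 1 ≤ t ≤ m let c_t = #{j : α_t < β_j < α_{t+1}} (with α_{m+1} = ∞), and for 1 ≤ r ≤ m let y_r = #{(I, j) : I ⊆ {1,...,m}, #I = r, j ∈ {1,...,n}, ∏_{i ∈ I}(α_i − β_j) < 0}. Then y_r = ∑_{s=1}^{m} T_m(r,s) · c_s, where T_m(r,s) = #{I ⊆ {1,...,m} : #I = r ∧ #{i ∈ I : i ≤ s} is odd}. -/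
lemma prod_neg_iff_odd {ι : Type*} [DecidableEq ι] (f : ι → ℝ) (I : Finset ι)
    (h : ∀ i ∈ I, f i ≠ 0) :
    ((∏ i ∈ I, f i) < 0) ↔ Odd ((I.filter (fun i => f i < 0)).card) := by
  classical
  revert h
  induction I using Finset.induction_on with
  | empty => intro _; simp
  | @insert a s ha ih =>
    intro h
    have ha0 : f a ≠ 0 := h a (Finset.mem_insert_self a s)
    have hs : ∀ i ∈ s, f i ≠ 0 := fun i hi => h i (Finset.mem_insert_of_mem hi)
    have hP : (∏ i ∈ s, f i) ≠ 0 := Finset.prod_ne_zero_iff.2 hs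
    rw [Finset.prod_insert ha, Finset.filter_insert]
    rcases lt_or_gt_of_ne ha0 with hneg | hpos
    · rw [if_pos hneg,
        Finset.card_insert_of_notMem (fun hmem => ha (Finset.mem_of_mem_filter a hmem)),
        Nat.odd_add_one, ← ih hs]
      constructor
      · intro hlt hcon
        nlinarith
      · intro hnl
        have : 0 < ∏ i ∈ s, f i := lt_of_le_of_ne (not_lt.1 hnl) (Ne.symm hP)
        nlinarith
    · rw [if_neg (not_lt.2 hpos.le), ← ih hs]
      constructor
      · intro hlt
        by_contra hcon
        have : 0 < ∏ i ∈ s, f i := lt_of_le_of_ne (not_lt.1 hcon) (Ne.symm hP)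
        nlinarith
      · intro h'; nlinarith

theorem stmt_12 (m n : ℕ) (hm : 1 ≤ m) (α β : ℕ → ℝ)
    (hmono : ∀ i, 1 ≤ i → i < m → α i ≤ α (i + 1))
    (hne : ∀ i ∈ Finset.Icc 1 m, ∀ j ∈ Finset.Icc 1 n, α i ≠ β j)
    (hgt : ∀ j ∈ Finset.Icc 1 n, α 1 < β j)
    (c : ℕ → ℕ)
    (hc : ∀ t ∈ Finset.Icc 1 m,
      c t = ((Finset.Icc 1 n).filter
        (fun j => α t < β j ∧ (t < m → β j < α (t + 1)))).card)
    (y : ℕ → ℕ)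
    (hy : ∀ r ∈ Finset.Icc 1 m,
      y r = (((Finset.powersetCard r (Finset.Icc 1 m)) ×ˢ (Finset.Icc 1 n)).filter
        (fun p => (∏ i ∈ p.1, (α i - β p.2)) < 0)).card)
    (r : ℕ) (hr : r ∈ Finset.Icc 1 m) :
    y r = ∑ s ∈ Finset.Icc 1 m, T m r s * c s := by
  classical
  -- monotonicity of α on [1, m]
  have mono : ∀ i' i, 1 ≤ i → i ≤ i' → i' ≤ m → α i ≤ α i' := by
    intro i'
    induction i' with
    | zero => intro i h1 h2 _; omega
    | succ k ih =>
      intro i h1 h2 hkm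
      rcases Nat.lt_or_ge i (k + 1) with hlt | hge
      · have hik : i ≤ k := by omega
        have h1k : 1 ≤ k := le_trans h1 hik
        calc α i ≤ α k := ih i h1 hik (by omega)
          _ ≤ α (k + 1) := hmono k h1k (by omega)
      · have : i = k + 1 := by omega
        subst this; exact le_rfl
  -- each β j lies above exactly the α i with i ≤ σ j
  have key : ∀ j, ∃ s, j ∈ Finset.Icc 1 n → s ∈ Finset.Icc 1 m ∧
      ∀ i ∈ Finset.Icc 1 m, (α i < β j ↔ i ≤ s) := by
    intro j
    by_cases hj : j ∈ Finset.Icc 1 n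
    · set Sj := (Finset.Icc 1 m).filter (fun i => α i < β j) with hSj
      have h1 : (1 : ℕ) ∈ Sj := by
        rw [hSj, Finset.mem_filter, Finset.mem_Icc]
        exact ⟨⟨le_rfl, hm⟩, hgt j hj⟩
      have hne' : Sj.Nonempty := ⟨1, h1⟩
      refine ⟨Sj.max' hne', fun _ => ?_⟩
      obtain ⟨hm1, hm2⟩ := Finset.mem_filter.1 (Sj.max'_mem hne')
      rw [Finset.mem_Icc] at hm1
      refine ⟨Finset.mem_Icc.2 ⟨le_trans (by norm_num) (Sj.le_max' 1 h1), hm1.2⟩, ?_⟩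
      intro i hi
      rw [Finset.mem_Icc] at hi
      constructor
      · intro hlt
        exact Sj.le_max' i (by rw [hSj, Finset.mem_filter, Finset.mem_Icc]; exact ⟨hi, hlt⟩)
      · intro hle
        exact lt_of_le_of_lt (mono _ i hi.1 hle hm1.2) hm2
    · exact ⟨1, fun hj' => absurd hj' hj⟩
  choose σ hσ using key
  -- fibers of σ are exactly the sets counted by c
  have fiber : ∀ s ∈ Finset.Icc 1 m, ∀ j ∈ Finset.Icc 1 n,
      (σ j = s ↔ (α s < β j ∧ (s < m → β j < α (s + 1)))) := by
    intro s hs j hj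
    obtain ⟨hσm, hiff⟩ := hσ j hj
    rw [Finset.mem_Icc] at hσm
    have hs' := Finset.mem_Icc.1 hs
    constructor
    · rintro rfl
      refine ⟨(hiff (σ j) hs).2 le_rfl, fun hlt => ?_⟩
      have hmem : σ j + 1 ∈ Finset.Icc 1 m := Finset.mem_Icc.2 ⟨by omega, by omega⟩
      have h1 : ¬ (α (σ j + 1) < β j) := fun hcon => by
        have := (hiff (σ j + 1) hmem).1 hcon
        omega
      exact (not_lt.1 h1).lt_of_ne (Ne.symm (hne (σ j + 1) hmem j hj))
    · rintro ⟨h1, h2⟩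
      have hsle : s ≤ σ j := (hiff s hs).1 h1
      rcases Nat.lt_or_ge s m with hsm | hsm
      · have hb := h2 hsm
        have hmem : s + 1 ∈ Finset.Icc 1 m := Finset.mem_Icc.2 ⟨by omega, by omega⟩
        have : ¬ (s + 1 ≤ σ j) := fun hcon =>
          absurd ((hiff (s + 1) hmem).2 hcon) (not_lt.2 hb.le)
        omega
      · omega
  rw [hy r hr]
  -- rewrite the sign condition
  have step1 : (((Finset.powersetCard r (Finset.Icc 1 m)) ×ˢ (Finset.Icc 1 n)).filter
        (fun p => (∏ i ∈ p.1, (α i - β p.2)) < 0))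
      = (((Finset.powersetCard r (Finset.Icc 1 m)) ×ˢ (Finset.Icc 1 n)).filter
        (fun p => Odd ((p.1.filter (fun i => i ≤ σ p.2)).card))) := by
    apply Finset.filter_congr
    rintro ⟨I, j⟩ hp
    rw [Finset.mem_product] at hp
    obtain ⟨hI, hj⟩ := hp
    have hIsub : I ⊆ Finset.Icc 1 m := (Finset.mem_powersetCard.1 hI).1
    have hne0 : ∀ i ∈ I, α i - β j ≠ 0 := fun i hi =>
      sub_ne_zero.2 (hne i (hIsub hi) j hj)
    have hfe : I.filter (fun i => α i - β j < 0) = I.filter (fun i => i ≤ σ j) := by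
      apply Finset.filter_congr
      intro i hi
      rw [sub_neg]
      exact (hσ j hj).2 i (hIsub hi)
    simp only []
    rw [prod_neg_iff_odd _ _ hne0, hfe]
  rw [step1, Finset.card_filter, Finset.sum_product_right]
  have step2 : ∀ j ∈ Finset.Icc 1 n,
      (∑ I ∈ Finset.powersetCard r (Finset.Icc 1 m),
        if Odd ((I.filter (fun i => i ≤ σ j)).card) then 1 else 0) = T m r (σ j) := by
    intro j _
    rw [T, Finset.card_filter]
  rw [Finset.sum_congr rfl step2]
  rw [← Finset.sum_fiberwise_of_maps_to (g := σ) (t := Finset.Icc 1 m)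
    (fun j hj => (hσ j hj).1)]
  apply Finset.sum_congr rfl
  intro s hs
  have hcard : ((Finset.Icc 1 n).filter (fun j => σ j = s)).card = c s := by
    rw [hc s hs]
    congr 1
    apply Finset.filter_congr
    intro j hj
    exact fiber s hs j hj
  calc (∑ j ∈ (Finset.Icc 1 n).filter (fun j => σ j = s), T m r (σ j))
      = ∑ _j ∈ (Finset.Icc 1 n).filter (fun j => σ j = s), T m r s := by
        apply Finset.sum_congr rfl
        intro j hj
        rw [(Finset.mem_filter.1 hj).2]
    _ = ((Finset.Icc 1 n).filter (fun j => σ j = s)).card * T m r s := by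
        rw [Finset.sum_const, smul_eq_mul]
    _ = T m r s * c s := by rw [hcard, Nat.mul_comm]
end

section
/- Let α = (α_1,...,α_m) and β = (β_1,...,β_n) be variables and let h_r be the polynomial ∏_{I ⊆ [m], #I = r} ∏_{j ∈ [n]} ( x + ∏_{i ∈ I}(α_i − β_j) ), regarded as a polynomial in x whose coefficients are polynomials in α and β. Then there exists a polynomial D_r in m + n + 1 variables with integer coefficients such that h_r(α, β, x) = D_r(e_1(α),...,e_m(α), e_1(β),...,e_n(β), x), where e_k denotes the k-th elementary symmetric polynomial. -/
open MvPolynomial Finset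

/-- The `k`-th elementary symmetric function of `v : Fin m → R` (here `k ≥ 1`,
given as `k = k'+1`): `e_k(v) = ∑_{1 ≤ i_1 < … < i_k ≤ m} v_{i_1} ⋯ v_{i_k}`. -/
def esym {R : Type*} [CommRing R] {m : ℕ} (k : ℕ) (v : Fin m → R) : R :=
  ∑ I ∈ Finset.powersetCard k (Finset.univ : Finset (Fin m)), ∏ i ∈ I, v i

noncomputable def bigP (m n r : ℕ) :
    MvPolynomial (Fin m) (MvPolynomial (Fin n) (MvPolynomial Unit ℤ)) :=
  ∏ I ∈ Finset.powersetCard r (Finset.univ : Finset (Fin m)), ∏ j : Fin n,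
    (C (C (X ())) + ∏ i ∈ I, (X i - C (X j)))

lemma bigP_symm (m n r : ℕ) : (bigP m n r).IsSymmetric := by
  intro e
  unfold bigP
  rw [map_prod]
  refine Finset.prod_nbij' (fun I => I.image e) (fun I => I.image e.symm) ?_ ?_ ?_ ?_ ?_
  · intro I hI
    simp only [mem_powersetCard_univ] at hI ⊢
    rw [Finset.card_image_of_injective _ e.injective, hI]
  · intro I hI
    simp only [mem_powersetCard_univ] at hI ⊢
    rw [Finset.card_image_of_injective _ e.symm.injective, hI]
  · intro I _
    simp [Finset.image_image]
  · intro I _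
    simp [Finset.image_image]
  · intro I _
    rw [map_prod]
    refine Finset.prod_congr rfl fun j _ => ?_
    rw [map_add, map_prod, rename_C]
    congr 1
    rw [Finset.prod_image (fun a _ b _ h => e.injective h)]
    refine Finset.prod_congr rfl fun i _ => ?_
    rw [map_sub, rename_X, rename_C]

set_option maxHeartbeats 1000000 in
lemma bigP_beta_symm (m n r : ℕ) (τ : Equiv.Perm (Fin n)) :
    MvPolynomial.map ((rename (R := MvPolynomial Unit ℤ) (σ := Fin n) τ).toRingHom)
      (bigP m n r) = bigP m n r := by
  unfold bigP
  simp only [map_prod, map_add, map_sub, map_C, map_X, AlgHom.toRingHom_eq_coe,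
    AlgHom.coe_toRingHom, rename_C, rename_X]
  refine Finset.prod_congr rfl fun I _ => ?_
  exact Equiv.prod_comp τ fun j => (C (C (X ())) + ∏ i ∈ I, (X i - C (X j)) :
    MvPolynomial (Fin m) (MvPolynomial (Fin n) (MvPolynomial Unit ℤ)))

lemma ringHom_esymm {m : ℕ} {A R : Type*} [CommRing A] [CommRing R]
    (φ : MvPolynomial (Fin m) A →+* R) (k : ℕ) :
    φ (esymm (Fin m) A k) = esym k (fun i => φ (X i)) := by
  rw [esymm, map_sum, esym]
  exact Finset.sum_congr rfl fun I _ => map_prod φ _ _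

set_option maxHeartbeats 2000000 in
set_option synthInstance.maxHeartbeats 400000 in
theorem stmt_15 (m n r : ℕ) (hr1 : 1 ≤ r) (hrm : r ≤ m) :
    ∃ D : MvPolynomial (Fin m ⊕ Fin n ⊕ Unit) ℤ,
      ∀ (R : Type) (_ : CommRing R) (α : Fin m → R) (β : Fin n → R) (x : R),
        (∏ I ∈ Finset.powersetCard r (Finset.univ : Finset (Fin m)), ∏ j : Fin n,
            (x + ∏ i ∈ I, (α i - β j))) =
          MvPolynomial.aeval
            (Sum.elim (fun k : Fin m => esym ((k : ℕ) + 1) α)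
              (Sum.elim (fun k : Fin n => esym ((k : ℕ) + 1) β)
                (fun _ => x))) D := by
  classical
  -- Step 1: express bigP via elementary symmetric polynomials in the α-variables
  obtain ⟨Q, hQ⟩ : ∃ Q : MvPolynomial (Fin m) (MvPolynomial (Fin n) (MvPolynomial Unit ℤ)),
      aeval (fun i : Fin m =>
        esymm (Fin m) (MvPolynomial (Fin n) (MvPolynomial Unit ℤ)) ((i : ℕ) + 1)) Q
        = bigP m n r := by
    obtain ⟨Q, hQ⟩ := esymmAlgHom_fin_surjective
      (R := MvPolynomial (Fin n) (MvPolynomial Unit ℤ)) (le_refl m)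
      ⟨bigP m n r, bigP_symm m n r⟩
    refine ⟨Q, ?_⟩
    have := congrArg Subtype.val hQ
    rwa [esymmAlgHom_apply] at this
  -- Step 2: the coefficients of Q are symmetric in the β-variables
  have hsymcoeff : ∀ d : Fin m →₀ ℕ, (Q.coeff d).IsSymmetric := by
    intro d τ
    set fτ := (rename (R := MvPolynomial Unit ℤ) (σ := Fin n) τ).toRingHom with hfτ
    have hmapQ : MvPolynomial.map fτ Q = Q := by
      apply esymmAlgHom_fin_injective
        (R := MvPolynomial (Fin n) (MvPolynomial Unit ℤ)) (n := m) (le_refl m)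
      apply Subtype.ext
      rw [esymmAlgHom_apply, esymmAlgHom_apply]
      show aeval (fun i : Fin m =>
        esymm (Fin m) (MvPolynomial (Fin n) (MvPolynomial Unit ℤ)) ((i : ℕ) + 1))
          (MvPolynomial.map fτ Q) = aeval _ Q
      rw [hQ, aeval_def, algebraMap_eq, eval₂_map]
      have hb : bigP m n r = MvPolynomial.map fτ (bigP m n r) := (bigP_beta_symm m n r τ).symm
      rw [hb, ← hQ, aeval_def, algebraMap_eq, eval₂_comp_left]
      rw [show (MvPolynomial.map fτ).comp
          (C : MvPolynomial (Fin n) (MvPolynomial Unit ℤ) →+*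
            MvPolynomial (Fin m) (MvPolynomial (Fin n) (MvPolynomial Unit ℤ))) = C.comp fτ
        from RingHom.ext fun a => map_C fτ a]
      congr 1
      funext i
      show esymm (Fin m) (MvPolynomial (Fin n) (MvPolynomial Unit ℤ)) ((i : ℕ) + 1) =
        MvPolynomial.map fτ
          (esymm (Fin m) (MvPolynomial (Fin n) (MvPolynomial Unit ℤ)) ((i : ℕ) + 1))
      rw [map_esymm]
    have := congrArg (fun p => MvPolynomial.coeff d p) hmapQ
    simpa [MvPolynomial.coeff_map, hfτ] using this
  -- Step 3: choose expressions for the coefficients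
  have hrep : ∀ d : Fin m →₀ ℕ, ∃ qd : MvPolynomial (Fin n) (MvPolynomial Unit ℤ),
      aeval (fun j : Fin n => esymm (Fin n) (MvPolynomial Unit ℤ) ((j : ℕ) + 1)) qd
        = Q.coeff d := by
    intro d
    obtain ⟨qd, hqd⟩ := esymmAlgHom_fin_surjective (R := MvPolynomial Unit ℤ) (le_refl n)
      ⟨Q.coeff d, hsymcoeff d⟩
    refine ⟨qd, ?_⟩
    have := congrArg Subtype.val hqd
    rwa [esymmAlgHom_apply] at this
  choose q hq using hrep
  -- Step 4: assemble D
  set ρ : MvPolynomial (Fin n) (MvPolynomial Unit ℤ) →+*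
      MvPolynomial (Fin m ⊕ Fin n ⊕ Unit) ℤ :=
    eval₂Hom (eval₂Hom C (fun _ : Unit => X (Sum.inr (Sum.inr ()))))
      (fun j => X (Sum.inr (Sum.inl j))) with hρ
  refine ⟨∑ d ∈ Q.support, ρ (q d) * monomial (d.mapDomain Sum.inl) 1, ?_⟩
  intro R _ α β x
  set φ₀ : MvPolynomial Unit ℤ →+* R := eval₂Hom (Int.castRingHom R) (fun _ => x) with hφ₀
  set φ₁ : MvPolynomial (Fin n) (MvPolynomial Unit ℤ) →+* R := eval₂Hom φ₀ β with hφ₁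
  set φ₂ : MvPolynomial (Fin m) (MvPolynomial (Fin n) (MvPolynomial Unit ℤ)) →+* R :=
    eval₂Hom φ₁ α with hφ₂
  set v : Fin m ⊕ Fin n ⊕ Unit → R :=
    Sum.elim (fun k : Fin m => esym ((k : ℕ) + 1) α)
      (Sum.elim (fun k : Fin n => esym ((k : ℕ) + 1) β) (fun _ => x)) with hv
  -- LHS equals φ₂ (bigP m n r)
  have hLHS : (∏ I ∈ Finset.powersetCard r (Finset.univ : Finset (Fin m)), ∏ j : Fin n,
      (x + ∏ i ∈ I, (α i - β j))) = φ₂ (bigP m n r) := by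
    unfold bigP
    simp only [hφ₂, hφ₁, hφ₀, map_prod, map_add, map_sub, eval₂Hom_C, eval₂Hom_X']
  rw [hLHS, ← hQ]
  -- expand the left side as a sum over the support of Q
  have hphi2 : φ₂ (aeval (fun i : Fin m =>
      esymm (Fin m) (MvPolynomial (Fin n) (MvPolynomial Unit ℤ)) ((i : ℕ) + 1)) Q) =
      ∑ d ∈ Q.support, φ₁ (Q.coeff d) * ∏ i ∈ d.support, (esym ((i : ℕ) + 1) α) ^ d i := by
    rw [aeval_def, algebraMap_eq, eval₂_comp_left, eval₂_eq]
    refine Finset.sum_congr rfl fun d _ => ?_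
    refine congrArg₂ (· * ·) ?_ ?_
    · show φ₂ (C (Q.coeff d)) = φ₁ (Q.coeff d)
      simp only [hφ₂, eval₂Hom_C]
    · refine Finset.prod_congr rfl fun i _ => ?_
      refine congrArg₂ (· ^ ·) ?_ rfl
      show φ₂ (esymm (Fin m) (MvPolynomial (Fin n) (MvPolynomial Unit ℤ)) ((i : ℕ) + 1)) = _
      rw [ringHom_esymm]
      unfold esym
      refine Finset.sum_congr rfl fun I _ => Finset.prod_congr rfl fun i' _ => ?_
      simp only [hφ₂, eval₂Hom_X']
  rw [hphi2, map_sum]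
  refine Finset.sum_congr rfl fun d _ => ?_
  rw [map_mul]
  refine congrArg₂ (· * ·) ?_ ?_
  · -- φ₁ (Q.coeff d) = aeval v (ρ (q d))
    have key : aeval v (ρ (q d)) =
        eval₂ φ₀ (fun j : Fin n => esym ((j : ℕ) + 1) β) (q d) := by
      show (aeval v : MvPolynomial (Fin m ⊕ Fin n ⊕ Unit) ℤ →ₐ[ℤ] R).toRingHom (ρ (q d)) = _
      rw [hρ, coe_eval₂Hom, eval₂_comp_left]
      rw [show ((aeval v : MvPolynomial (Fin m ⊕ Fin n ⊕ Unit) ℤ →ₐ[ℤ] R).toRingHom).comp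
          (eval₂Hom (C : ℤ →+* MvPolynomial (Fin m ⊕ Fin n ⊕ Unit) ℤ)
            (fun _ : Unit => X (Sum.inr (Sum.inr ())))) = φ₀ from ?_]
      · refine congrArg₂ (fun f g => eval₂ φ₀ f g) ?_ rfl
        funext j
        show aeval v (X (Sum.inr (Sum.inl j))) = _
        rw [aeval_X, hv]
        rfl
      · refine MvPolynomial.ringHom_ext (fun z => ?_) (fun u => ?_)
        · simp [hφ₀]
        · rw [RingHom.comp_apply, eval₂Hom_X']
          show aeval v (X (Sum.inr (Sum.inr u))) = φ₀ (X u)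
          rw [aeval_X, hφ₀, eval₂Hom_X', hv]
          rfl
    have key2 : φ₁ (Q.coeff d) =
        eval₂ φ₀ (fun j : Fin n => esym ((j : ℕ) + 1) β) (q d) := by
      rw [← hq d, aeval_def, algebraMap_eq, eval₂_comp_left]
      rw [show φ₁.comp (C : MvPolynomial Unit ℤ →+*
          MvPolynomial (Fin n) (MvPolynomial Unit ℤ)) = φ₀ from hφ₁ ▸ eval₂Hom_comp_C _ _]
      refine congrArg₂ (fun f g => eval₂ φ₀ f g) ?_ rfl
      funext j
      show φ₁ (esymm (Fin n) (MvPolynomial Unit ℤ) ((j : ℕ) + 1)) = _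
      rw [ringHom_esymm]
      unfold esym
      refine Finset.sum_congr rfl fun I _ => Finset.prod_congr rfl fun j' _ => ?_
      simp only [hφ₁, eval₂Hom_X']
    rw [key, key2]
  · -- aeval v (monomial (mapDomain inl d) 1) = ∏ esym^d
    rw [aeval_monomial, map_one, one_mul,
      Finsupp.prod_mapDomain_index_inj Sum.inl_injective]
    rw [Finsupp.prod]
    refine (Finset.prod_congr rfl fun i _ => ?_).symm
    rw [hv]
    rfl
end

section
/- Let p be a monic real polynomial of degree d all of whose roots are real. Then the number of positive roots of p, counted with multiplicity, equals the number of sign variations in the sequence of nonzero coefficients of p. -/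
open Polynomial

/-- The number of sign variations in the coefficient sequence of a real polynomial:
take the coefficients `p.coeff 0, …, p.coeff p.natDegree`, discard the zeros, and
count the pairs of consecutive entries with opposite signs. -/
noncomputable def signVariations (p : Polynomial ℝ) : ℕ :=
  let l := ((List.range (p.natDegree + 1)).map p.coeff).filter (fun a => decide (a ≠ 0))
  (List.range (l.length - 1)).countP (fun i => decide (l.getD i 0 * l.getD (i + 1) 0 < 0))

namespace SVAux

/-- sign variations with an "anchor" `a` (the last nonzero value seen so far;
`a = 0` means no anchor yet). -/
noncomputable def svA (a : ℝ) : List ℝ → ℕ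
  | [] => 0
  | b :: l => if b = 0 then svA a l else (if a * b < 0 then 1 else 0) + svA b l

/-- sign variations of a list of reals. -/
noncomputable def sv (l : List ℝ) : ℕ := svA 0 l

@[simp] lemma svA_nil (a : ℝ) : svA a [] = 0 := rfl

lemma svA_cons (a b : ℝ) (l : List ℝ) :
    svA a (b :: l) = if b = 0 then svA a l else (if a * b < 0 then 1 else 0) + svA b l := by
  rw [svA]

@[simp] lemma svA_cons_zero (a : ℝ) (l : List ℝ) : svA a (0 :: l) = svA a l := by
  simp [svA_cons]

lemma svA_cons_ne (a : ℝ) {b : ℝ} (hb : b ≠ 0) (l : List ℝ) :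
    svA a (b :: l) = (if a * b < 0 then 1 else 0) + svA b l := by
  simp [svA_cons, hb]

lemma mul_lt_iff_of_pos_mul {a b x : ℝ} (h : 0 < a * b) : a * x < 0 ↔ b * x < 0 := by
  constructor <;> intro hlt <;>
    nlinarith [mul_neg_of_neg_of_pos hlt h, sq_nonneg a, sq_nonneg b]

/-- the anchor only matters through its sign -/
lemma svA_congr {a b : ℝ} (h : 0 < a * b) (l : List ℝ) : svA a l = svA b l := by
  induction l with
  | nil => rfl
  | cons x t ih =>
    rcases eq_or_ne x 0 with rfl | hx
    · simp [ih]
    · rw [svA_cons_ne _ hx, svA_cons_ne _ hx,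
        if_congr (mul_lt_iff_of_pos_mul h) rfl rfl]

lemma svA_le_add_one (a b : ℝ) (l : List ℝ) : svA a l ≤ svA b l + 1 := by
  induction l generalizing a b with
  | nil => simp
  | cons x t ih =>
    rcases eq_or_ne x 0 with rfl | hx
    · simpa using ih a b
    · rw [svA_cons_ne _ hx, svA_cons_ne _ hx]
      split_ifs <;> omega

lemma svA_zero_le (a : ℝ) (l : List ℝ) : svA 0 l ≤ svA a l := by
  induction l generalizing a with
  | nil => simp
  | cons x t ih =>
    rcases eq_or_ne x 0 with rfl | hx
    · simpa using ih a
    · rw [svA_cons_ne _ hx, svA_cons_ne _ hx]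
      have h0 : ¬((0:ℝ) * x < 0) := by simp
      rw [if_neg h0]
      split_ifs <;> omega

lemma le_svA_cons (a y : ℝ) (l : List ℝ) : svA a l ≤ svA a (y :: l) := by
  rcases eq_or_ne y 0 with rfl | hy
  · simp
  · rw [svA_cons_ne _ hy]
    rcases eq_or_ne a 0 with rfl | ha
    · have := svA_zero_le y l
      split_ifs <;> omega
    · rcases lt_trichotomy (a * y) 0 with h | h | h
      · have := svA_le_add_one a y l
        rw [if_pos h]; omega
      · exact absurd (mul_eq_zero.mp h) (by tauto)
      · rw [svA_congr h]
        rw [if_neg (not_lt.mpr h.le)]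
        omega

lemma svA_neg_map_neg (a : ℝ) (l : List ℝ) :
    svA (-a) (l.map (fun y => -y)) = svA a l := by
  induction l generalizing a with
  | nil => simp
  | cons x t ih =>
    rcases eq_or_ne x 0 with rfl | hx
    · simpa using ih a
    · rw [List.map_cons, svA_cons_ne _ (by simpa using hx), svA_cons_ne _ hx]
      rw [ih x]
      have : -a * -x = a * x := by ring
      rw [this]

lemma sv_map_neg (l : List ℝ) : sv (l.map (fun y => -y)) = sv l := by
  have := svA_neg_map_neg 0 l
  simpa [sv] using this

@[simp] lemma sv_cons_zero (l : List ℝ) : sv (0 :: l) = sv l := by simp [sv]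

end SVAux

namespace SVAux

/-- coefficient list of `(X - a) * q` given the coefficient list of `q` (constant term
first), where `prev` is the previous coefficient (initially 0). -/
noncomputable def mlin (a : ℝ) : ℝ → List ℝ → List ℝ
  | prev, [] => [prev]
  | prev, x :: t => (prev - a * x) :: mlin a x t

@[simp] lemma mlin_nil (a prev : ℝ) : mlin a prev [] = [prev] := rfl
@[simp] lemma mlin_cons (a prev x : ℝ) (t : List ℝ) :
    mlin a prev (x :: t) = (prev - a * x) :: mlin a x t := rfl

@[simp] lemma mlin_length (a prev : ℝ) (t : List ℝ) : (mlin a prev t).length = t.length + 1 := by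
  induction t generalizing prev with
  | nil => rfl
  | cons x t ih => simp [ih]

lemma mlin_key {a : ℝ} (ha : 0 < a) : ∀ n : ℕ,
    (∀ t : List ℝ, t.length ≤ n → ∀ h w : ℝ, h ≠ 0 → w * h < 0 →
      svA h t + 1 ≤ svA w (mlin a h t)) ∧
    (∀ t : List ℝ, t.length ≤ n → ∀ v v' : ℝ, svA v' t ≤ svA v (mlin a 0 t)) := by
  intro n
  induction n with
  | zero =>
    constructor
    · intro t ht h w hh hwh
      rw [List.length_eq_zero_iff.mp (Nat.le_zero.mp ht)]
      have : w * h < 0 := hwh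
      simp [mlin_nil, svA_cons_ne _ hh, if_pos this]
    · intro t ht v v'
      rw [List.length_eq_zero_iff.mp (Nat.le_zero.mp ht)]
      simp [mlin_nil]
  | succ n ih =>
    obtain ⟨ihG, ihZ⟩ := ih
    constructor
    · -- the G lemma
      intro t ht h w hh hwh
      match t with
      | [] =>
        simp [mlin_nil, svA_cons_ne _ hh, if_pos hwh]
      | x :: t' =>
        have ht' : t'.length ≤ n := by simpa using ht
        rcases eq_or_ne x 0 with rfl | hx
        · -- x = 0 case
          rw [mlin_cons, svA_cons_zero]
          have hz : h - a * 0 = h := by ring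
          rw [hz, svA_cons_ne _ hh, if_pos hwh]
          have := ihZ t' ht' h h
          omega
        · rcases lt_trichotomy (h * x) 0 with hhx | hhx | hhx
          · -- opposite signs
            have hyh : 0 < (h - a * x) * h := by
              nlinarith [mul_self_pos.mpr hh, mul_pos ha (neg_pos.mpr hhx)]
            have hyx : (h - a * x) * x < 0 := by
              nlinarith [mul_pos ha (mul_self_pos.mpr hx)]
            have hy0 : h - a * x ≠ 0 := by
              intro h0; rw [h0] at hyh; simp at hyh
            have hwy : w * (h - a * x) < 0 := by
              nlinarith [mul_pos hyh (neg_pos.mpr hwh), sq_nonneg h, mul_self_pos.mpr hh]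
            rw [mlin_cons, svA_cons_ne _ hy0, if_pos hwy, svA_cons_ne _ hx, if_pos hhx]
            have := ihG t' ht' x (h - a * x) hx hyx
            omega
          · exact absurd (mul_eq_zero.mp hhx) (by tauto)
          · -- same signs
            have hwx : w * x < 0 := by
              nlinarith [mul_pos hhx (neg_pos.mpr hwh), sq_nonneg h, mul_self_pos.mpr hh]
            rw [mlin_cons, svA_cons_ne _ hx, if_neg (not_lt.mpr hhx.le)]
            have h1 : svA x t' + 1 ≤ svA w (mlin a x t') := ihG t' ht' x w hx hwx
            have h2 : svA w (mlin a x t') ≤ svA w ((h - a * x) :: mlin a x t') :=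
              le_svA_cons _ _ _
            omega
    · -- the Z lemma
      intro t ht v v'
      match t with
      | [] => simp [mlin_nil]
      | x :: t' =>
        have ht' : t'.length ≤ n := by simpa using ht
        rcases eq_or_ne x 0 with rfl | hx
        · rw [mlin_cons, svA_cons_zero]
          have hz : (0:ℝ) - a * 0 = 0 := by ring
          rw [hz, svA_cons_zero]
          exact ihZ t' ht' v v'
        · have hax : -a * x ≠ 0 := by
            simp only [ne_eq, neg_mul, neg_eq_zero, mul_eq_zero]
            push_neg
            exact ⟨ne_of_gt ha, hx⟩
          have haxx : (-a * x) * x < 0 := by nlinarith [mul_self_pos.mpr hx]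
          have hz : (0:ℝ) - a * x = -a * x := by ring
          rw [mlin_cons, hz, svA_cons_ne _ hax, svA_cons_ne _ hx]
          have := ihG t' ht' x (-a * x) hx haxx
          split_ifs <;> omega

/-- multiplying by (X - a) with a > 0 increases sign variations. -/
lemma sv_mlin {a : ℝ} (ha : 0 < a) :
    ∀ c : List ℝ, (∃ x ∈ c, x ≠ 0) → sv c + 1 ≤ sv (mlin a 0 c) := by
  intro c
  induction c with
  | nil => rintro ⟨x, hx, _⟩; simp at hx
  | cons x t ih =>
    intro hex
    rcases eq_or_ne x 0 with rfl | hx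
    · have hz : (0:ℝ) - a * 0 = 0 := by ring
      rw [mlin_cons, hz, sv_cons_zero, sv_cons_zero]
      apply ih
      rcases hex with ⟨y, hy, hy0⟩
      rcases List.mem_cons.mp hy with rfl | hy
      · exact absurd rfl hy0
      · exact ⟨y, hy, hy0⟩
    · have hax : -a * x ≠ 0 := by
        simp only [ne_eq, neg_mul, neg_eq_zero, mul_eq_zero]
        push_neg
        exact ⟨ne_of_gt ha, hx⟩
      have haxx : (-a * x) * x < 0 := by nlinarith [mul_self_pos.mpr hx]
      have hz : (0:ℝ) - a * x = -a * x := by ring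
      rw [mlin_cons, hz]
      unfold sv
      rw [svA_cons_ne _ hax, svA_cons_ne _ hx]
      have hz0 : ¬ ((0:ℝ) * x < 0) := by simp
      have hz1 : ¬ ((0:ℝ) * (-a * x) < 0) := by simp
      rw [if_neg hz0, if_neg hz1]
      have := (mlin_key ha t.length).1 t le_rfl x (-a*x) hx haxx
      omega

/-- alternate the signs of a list (negate entries in odd positions). -/
noncomputable def alt : List ℝ → List ℝ
  | [] => []
  | x :: t => x :: (alt t).map (fun y => -y)

@[simp] lemma alt_nil : alt [] = [] := rfl
@[simp] lemma alt_cons (x : ℝ) (t : List ℝ) : alt (x :: t) = x :: (alt t).map (fun y => -y) :=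
  rfl

@[simp] lemma alt_length (l : List ℝ) : (alt l).length = l.length := by
  induction l with
  | nil => rfl
  | cons x t ih => simp [ih]

lemma getD_map_neg (m : List ℝ) : ∀ i, (m.map (fun y => -y)).getD i 0 = -(m.getD i 0) := by
  induction m with
  | nil => intro i; simp
  | cons x t ih =>
    intro i
    cases i with
    | zero => simp
    | succ j => simpa using ih j

lemma alt_getD (l : List ℝ) : ∀ i, (alt l).getD i 0 = (-1)^i * l.getD i 0 := by
  induction l with
  | nil => intro i; simp
  | cons x t ih =>
    intro i
    cases i with
    | zero => simp
    | succ j =>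
      simp only [alt_cons, List.getD_cons_succ]
      rw [getD_map_neg, ih j, pow_succ]
      ring

lemma svA_map_neg (a : ℝ) (l : List ℝ) : svA a (l.map (fun y => -y)) = svA (-a) l := by
  have := svA_neg_map_neg (-a) l
  rwa [neg_neg] at this

/-- key upper bound: variations of t and of alt t (with suitable anchors) sum to ≤ length. -/
lemma svA_alt_bound : ∀ (t : List ℝ) (h : ℝ),
    svA h t + svA (-h) (alt t) ≤ t.length ∧ svA h t + svA h (alt t) ≤ t.length + 1 := by
  intro t
  induction t with
  | nil => intro h; simp
  | cons x t' ih =>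
    intro h
    constructor
    · rcases eq_or_ne x 0 with rfl | hx
      · rw [svA_cons_zero, alt_cons, svA_cons_zero, svA_map_neg, neg_neg]
        have := (ih h).2
        simpa using this
      · rw [svA_cons_ne _ hx, alt_cons, svA_cons_ne _ hx, svA_map_neg]
        have hA := (ih x).1
        have hbr : (if h * x < 0 then 1 else 0) + (if -h * x < 0 then 1 else 0) ≤ 1 := by
          split_ifs with h1 h2 h2 <;> try omega
          · exfalso; nlinarith
        simp only [List.length_cons]
        omega
    · rcases eq_or_ne x 0 with rfl | hx
      · rw [svA_cons_zero, alt_cons, svA_cons_zero, svA_map_neg]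
        have := (ih h).1
        simp only [List.length_cons]
        omega
      · rw [svA_cons_ne _ hx, alt_cons, svA_cons_ne _ hx, svA_map_neg]
        have hA := (ih x).1
        have hbr : (if h * x < 0 then 1 else 0) ≤ 1 := by split_ifs <;> omega
        simp only [List.length_cons]
        omega

/-- upper bound for a list with nonzero head. -/
lemma sv_add_sv_alt_le {h : ℝ} (hh : h ≠ 0) (t : List ℝ) :
    sv (h :: t) + sv (alt (h :: t)) ≤ t.length := by
  have hz0 : ¬ ((0:ℝ) * h < 0) := by simp
  unfold sv
  rw [svA_cons_ne _ hh, if_neg hz0, alt_cons, svA_cons_ne _ hh, if_neg hz0, svA_map_neg]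
  have := (svA_alt_bound t h).1
  omega

lemma sv_replicate_append (k : ℕ) (l : List ℝ) :
    sv (List.replicate k 0 ++ l) = sv l := by
  induction k with
  | zero => simp
  | succ n ih => simpa [List.replicate_succ] using ih

lemma sv_alt_replicate_append (k : ℕ) (l : List ℝ) :
    sv (alt (List.replicate k 0 ++ l)) = sv (alt l) := by
  induction k with
  | zero => simp
  | succ n ih =>
    rw [List.replicate_succ, List.cons_append, alt_cons, sv_cons_zero]
    unfold sv
    rw [svA_map_neg, neg_zero]
    exact ih

end SVAux

namespace SVAux

noncomputable def coeffList (p : Polynomial ℝ) : List ℝ :=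
  (List.range (p.natDegree + 1)).map p.coeff

@[simp] lemma coeffList_length (p : Polynomial ℝ) : (coeffList p).length = p.natDegree + 1 := by
  simp [coeffList]

lemma coeffList_getD (p : Polynomial ℝ) (i : ℕ) : (coeffList p).getD i 0 = p.coeff i := by
  rcases lt_or_ge i (p.natDegree + 1) with h | h
  · rw [List.getD_eq_getElem _ _ (by simpa using h)]
    simp [coeffList]
  · rw [List.getD_eq_default _ _ (by simpa using h)]
    exact (Polynomial.coeff_eq_zero_of_natDegree_lt (by omega)).symm

lemma svA_filter_ne (a : ℝ) (l : List ℝ) :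
    svA a (l.filter (fun x => decide (x ≠ 0))) = svA a l := by
  induction l generalizing a with
  | nil => rfl
  | cons x t ih =>
    rcases eq_or_ne x 0 with rfl | hx
    · simpa using ih a
    · rw [List.filter_cons_of_pos (by simpa using hx), svA_cons_ne _ hx, svA_cons_ne _ hx, ih]

lemma countP_range_eq_sv (l : List ℝ) (hl : ∀ x ∈ l, x ≠ 0) :
    (List.range (l.length - 1)).countP
      (fun i => decide (l.getD i 0 * l.getD (i + 1) 0 < 0)) = sv l := by
  induction l with
  | nil => simp [sv]
  | cons x t ih =>
    have hx : x ≠ 0 := hl x (by simp)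
    match t with
    | [] =>
      simp [sv, svA_cons_ne _ hx, hx]
    | y :: t' =>
      have hy : y ≠ 0 := hl y (by simp)
      have ht : ∀ z ∈ y :: t', z ≠ 0 := fun z hz => hl z (List.mem_cons_of_mem _ hz)
      have hlen : (x :: y :: t').length - 1 = ((y :: t').length - 1) + 1 := by simp
      rw [hlen, List.range_succ_eq_map, List.countP_cons, List.countP_map]
      have heq : ((fun i => decide ((x :: y :: t').getD i 0 * (x :: y :: t').getD (i + 1) 0 < 0))
          ∘ Nat.succ) = (fun i => decide ((y :: t').getD i 0 * (y :: t').getD (i + 1) 0 < 0)) := by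
        funext i
        simp [Function.comp]
      rw [heq, ih ht]
      have h0 : ¬ ((0:ℝ) * x < 0) := by simp
      have lhs1 : sv (x :: y :: t') = (if x * y < 0 then 1 else 0) + svA y t' := by
        unfold sv
        rw [svA_cons_ne _ hx, if_neg h0, svA_cons_ne _ hy, zero_add]
      have h0y : ¬ ((0:ℝ) * y < 0) := by simp
      have lhs2 : sv (y :: t') = svA y t' := by
        unfold sv; rw [svA_cons_ne _ hy, if_neg h0y, zero_add]
      rw [lhs1, lhs2]
      simp only [List.getD_cons_zero, List.getD_cons_succ, decide_eq_true_eq]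
      split_ifs with h <;> omega

lemma signVariations_eq_sv (p : Polynomial ℝ) : _root_.signVariations p = sv (coeffList p) := by
  unfold _root_.signVariations
  have hfil : ∀ x ∈ (coeffList p).filter (fun a => decide (a ≠ 0)), x ≠ 0 := by
    intro x hx
    have := List.of_mem_filter hx
    simpa using this
  rw [show ((List.range (p.natDegree + 1)).map p.coeff) = coeffList p from rfl]
  rw [countP_range_eq_sv _ hfil]
  unfold sv
  exact svA_filter_ne 0 (coeffList p)

end SVAux

namespace SVAux

lemma mlin_getD (a : ℝ) : ∀ (c : List ℝ) (prev : ℝ) (i : ℕ),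
    (mlin a prev c).getD i 0 = (prev :: c).getD i 0 - a * c.getD i 0 := by
  intro c
  induction c with
  | nil =>
    intro prev i
    cases i with
    | zero => simp
    | succ j => simp
  | cons x t ih =>
    intro prev i
    cases i with
    | zero => simp
    | succ j => simpa using ih x j

lemma coeffList_mul_X_sub_C (a : ℝ) {q : Polynomial ℝ} (hq : q ≠ 0) :
    coeffList ((X - C a) * q) = mlin a 0 (coeffList q) := by
  have hdeg : ((X - C a) * q).natDegree = q.natDegree + 1 := by
    rw [natDegree_mul (X_sub_C_ne_zero a) hq, natDegree_X_sub_C]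
    omega
  have hlen : (coeffList ((X - C a) * q)).length = (mlin a 0 (coeffList q)).length := by
    simp [hdeg]
  apply List.ext_getElem hlen
  intro i h1 h2
  rw [← List.getD_eq_getElem _ 0 h1, ← List.getD_eq_getElem _ 0 h2]
  rw [coeffList_getD, mlin_getD]
  have hco : ((X - C a) * q).coeff i = (0 :: coeffList q).getD i 0 - a * q.coeff i := by
    rw [sub_mul, Polynomial.coeff_sub, Polynomial.coeff_C_mul]
    congr 1
    cases i with
    | zero => simp [Polynomial.mul_coeff_zero]
    | succ j =>
      rw [Polynomial.coeff_X_mul]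
      simp only [List.getD_cons_succ]
      exact (coeffList_getD q j).symm
  rw [hco, coeffList_getD]

lemma sv_coeffList_mul_X_sub_C {a : ℝ} (ha : 0 < a) {q : Polynomial ℝ} (hq : q ≠ 0) :
    sv (coeffList q) + 1 ≤ sv (coeffList ((X - C a) * q)) := by
  rw [coeffList_mul_X_sub_C a hq]
  apply sv_mlin ha
  refine ⟨q.coeff q.natDegree, ?_, ?_⟩
  · simp only [coeffList, List.mem_map]
    exact ⟨q.natDegree, by simp, rfl⟩
  · simpa using Polynomial.leadingCoeff_ne_zero.mpr hq

lemma card_le_sv_prod (S : Multiset ℝ) (hS : ∀ a ∈ S, 0 < a) (q : Polynomial ℝ) (hq : q ≠ 0) :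
    Multiset.card S + sv (coeffList q) ≤ sv (coeffList ((S.map (fun a => X - C a)).prod * q)) := by
  induction S using Multiset.induction_on with
  | empty => simp
  | cons a s ih =>
    have ha : 0 < a := hS a (Multiset.mem_cons_self a s)
    have hs : ∀ b ∈ s, 0 < b := fun b hb => hS b (Multiset.mem_cons_of_mem hb)
    have hprod : ((a ::ₘ s).map (fun a => X - C a)).prod * q
        = (X - C a) * ((s.map (fun a => X - C a)).prod * q) := by
      rw [Multiset.map_cons, Multiset.prod_cons, mul_assoc]
    rw [hprod]
    have hne : (s.map (fun a => X - C a)).prod * q ≠ 0 := by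
      apply mul_ne_zero _ hq
      apply Polynomial.Monic.ne_zero
      apply Polynomial.monic_multiset_prod_of_monic
      intro b _
      exact Polynomial.monic_X_sub_C b
    have h1 := sv_coeffList_mul_X_sub_C ha hne
    have h2 := ih hs
    simp only [Multiset.card_cons]
    omega

end SVAux

namespace SVAux

lemma coeff_comp_neg_X (p : Polynomial ℝ) (i : ℕ) :
    (p.comp (-X)).coeff i = (-1)^i * p.coeff i := by
  induction p using Polynomial.induction_on' with
  | add p q hp hq =>
    simp [Polynomial.add_comp, hp, hq]
    ring
  | monomial n a =>
    rw [← Polynomial.C_mul_X_pow_eq_monomial, Polynomial.mul_comp, Polynomial.C_comp,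
      Polynomial.pow_comp, Polynomial.X_comp, neg_pow]
    rw [show ((-1:Polynomial ℝ))^n = Polynomial.C ((-1:ℝ)^n) by simp [map_pow]]
    rw [← mul_assoc, ← Polynomial.C_mul, Polynomial.coeff_C_mul, Polynomial.coeff_C_mul,
      Polynomial.coeff_X_pow]
    rcases eq_or_ne i n with rfl | h
    · simp [mul_comm]
    · simp [h, Ne.symm h]

lemma natDegree_comp_neg_X (p : Polynomial ℝ) : (p.comp (-X)).natDegree = p.natDegree := by
  rw [Polynomial.natDegree_comp]
  simp

lemma sv_coeffList_flip (p : Polynomial ℝ) {p₂ : Polynomial ℝ}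
    (h2 : p₂ = (-1)^p.natDegree * p.comp (-X)) (hp : p ≠ 0) :
    sv (coeffList p₂) = sv (alt (coeffList p)) := by
  have hne : p.comp (-X) ≠ 0 := by
    intro h
    apply hp
    have := natDegree_comp_neg_X p
    -- better: use coefficients
    ext i
    have hc := coeff_comp_neg_X p i
    rw [h] at hc
    simp only [Polynomial.coeff_zero] at hc ⊢
    have : ((-1:ℝ))^i ≠ 0 := by
      apply pow_ne_zero; norm_num
    field_simp at hc
    exact (mul_eq_zero.mp hc.symm).resolve_left this
  have hd2 : p₂.natDegree = p.natDegree := by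
    rw [h2]
    rw [show ((-1:Polynomial ℝ))^p.natDegree = Polynomial.C ((-1:ℝ)^p.natDegree) by
      simp [map_pow]]
    rw [Polynomial.natDegree_C_mul (by apply pow_ne_zero; norm_num)]
    exact natDegree_comp_neg_X p
  have hco : ∀ i, p₂.coeff i = (-1)^(p.natDegree + i) * p.coeff i := by
    intro i
    rw [h2, show ((-1:Polynomial ℝ))^p.natDegree = Polynomial.C ((-1:ℝ)^p.natDegree) by
      simp [map_pow]]
    rw [Polynomial.coeff_C_mul, coeff_comp_neg_X, pow_add]
    ring
  have hlen : (coeffList p₂).length = (alt (coeffList p)).length := by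
    simp [hd2]
  rcases Nat.even_or_odd p.natDegree with he | ho
  · have : coeffList p₂ = alt (coeffList p) := by
      apply List.ext_getElem hlen
      intro i h1 h2'
      rw [← List.getD_eq_getElem _ 0 h1, ← List.getD_eq_getElem _ 0 h2']
      rw [coeffList_getD, alt_getD, coeffList_getD, hco i, pow_add, he.neg_one_pow, one_mul]
    rw [this]
  · have : coeffList p₂ = (alt (coeffList p)).map (fun y => -y) := by
      apply List.ext_getElem (by simpa using hlen)
      intro i h1 h2'
      rw [← List.getD_eq_getElem _ 0 h1, ← List.getD_eq_getElem _ 0 h2']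
      rw [coeffList_getD, getD_map_neg, alt_getD, coeffList_getD, hco i, pow_add, ho.neg_one_pow]
      ring
    rw [this, sv_map_neg]

end SVAux

namespace SVAux

lemma coeffList_X_pow_mul {u : Polynomial ℝ} (hu : u ≠ 0) (k : ℕ) :
    coeffList (X ^ k * u) = List.replicate k 0 ++ coeffList u := by
  have hXk : (X : Polynomial ℝ)^k ≠ 0 := pow_ne_zero _ Polynomial.X_ne_zero
  have hdeg : (X ^ k * u).natDegree = k + u.natDegree := by
    rw [natDegree_mul hXk hu, Polynomial.natDegree_X_pow]
  have hlen : (coeffList (X ^ k * u)).length = (List.replicate k 0 ++ coeffList u).length := by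
    simp [hdeg]; omega
  apply List.ext_getElem hlen
  intro i h1 h2
  rw [← List.getD_eq_getElem _ 0 h1, ← List.getD_eq_getElem _ 0 h2]
  rw [coeffList_getD, mul_comm, Polynomial.coeff_mul_X_pow']
  rcases lt_or_ge i k with h | h
  · rw [if_neg (by omega), List.getD_append _ _ _ _ (by simpa using h)]
    simp
  · rw [if_pos h, List.getD_append_right _ _ _ _ (by simpa using h)]
    rw [List.length_replicate, coeffList_getD]

lemma coeffList_cons (u : Polynomial ℝ) :
    coeffList u = u.coeff 0 :: (List.range u.natDegree).map (fun i => u.coeff (i+1)) := by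
  unfold coeffList
  rw [List.range_succ_eq_map, List.map_cons, List.map_map]
  congr 1

theorem descartes (p : Polynomial ℝ) (d : ℕ) (hd : p.natDegree = d)
    (hmonic : p.Monic) (hsplit : (p.map (RingHom.id ℝ)).Splits) :
    (p.roots.filter (fun x => 0 < x)).card = sv (coeffList p) := by
  have hp0 : p ≠ 0 := hmonic.ne_zero
  set R := p.roots with hR
  have hcard : Multiset.card R = d := by
    rw [← hd]; exact (Polynomial.splits_iff_card_roots.mp (by simpa using hsplit))
  have hfact : (R.map (fun a => X - C a)).prod = p := by
    have h := Polynomial.Splits.eq_prod_roots (by simpa using hsplit : p.Splits)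
    rw [hmonic.leadingCoeff] at h
    rw [← hR] at h
    simpa using h.symm
  -- the partition of roots
  set P := R.filter (fun x => 0 < x) with hP
  set N := R.filter (fun x => x < 0) with hN
  set m := Multiset.card P with hm
  set e := Multiset.card N with he
  set k := p.rootMultiplicity 0 with hk
  have hcount : Multiset.count 0 R = k := Polynomial.count_roots p
  have hmek : m + e + k = d := by
    have h1 : P + R.filter (fun x => ¬ 0 < x) = R := Multiset.filter_add_not _ R
    have h2 : (R.filter (fun x => ¬ 0 < x)).filter (fun x => x < 0)
        + (R.filter (fun x => ¬ 0 < x)).filter (fun x => ¬ x < 0) = R.filter (fun x => ¬ 0 < x) :=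
      Multiset.filter_add_not _ _
    have h3 : (R.filter (fun x => ¬ 0 < x)).filter (fun x => x < 0) = N := by
      rw [Multiset.filter_filter, hN]
      apply Multiset.filter_congr
      intro x _
      constructor
      · rintro ⟨h, _⟩; exact h
      · intro h; exact ⟨h, not_lt.mpr h.le⟩
    have h4 : (R.filter (fun x => ¬ 0 < x)).filter (fun x => ¬ x < 0)
        = R.filter (fun x => x = 0) := by
      rw [Multiset.filter_filter]
      apply Multiset.filter_congr
      intro x _
      constructor
      · rintro ⟨h1', h2'⟩; exact le_antisymm (not_lt.mp h2') (not_lt.mp h1')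
      · rintro rfl; exact ⟨lt_irrefl 0, lt_irrefl 0⟩
    have h5 : Multiset.card (R.filter (fun x => x = 0)) = k := by
      rw [← hcount, Multiset.count, Multiset.countP_eq_card_filter]
      congr 1
      apply Multiset.filter_congr
      intro x _
      exact ⟨fun h => h.symm, fun h => h.symm⟩
    have hc1 := congrArg Multiset.card h1
    have hc2 := congrArg Multiset.card h2
    rw [Multiset.card_add] at hc1 hc2
    rw [h3, h4, h5] at hc2
    omega
  -- lower bound 1 : m ≤ sv (coeffList p)
  have hlow1 : m ≤ sv (coeffList p) := by
    have hsplit1 : P + R.filter (fun x => ¬ 0 < x) = R := Multiset.filter_add_not _ R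
    set q₁ := ((R.filter (fun x => ¬ 0 < x)).map (fun a => X - C a)).prod with hq₁
    have hq₁m : q₁.Monic :=
      Polynomial.monic_multiset_prod_of_monic _ _ (fun b _ => Polynomial.monic_X_sub_C b)
    have hfact1 : (P.map (fun a => X - C a)).prod * q₁ = p := by
      rw [hq₁, ← Multiset.prod_add, ← Multiset.map_add, hsplit1, hfact]
    have := card_le_sv_prod P (fun a ha => (Multiset.mem_filter.mp ha).2) q₁ hq₁m.ne_zero
    rw [hfact1] at this
    omega
  -- the flipped polynomial
  set p₂ := (R.map (fun a => X + C a)).prod with hp₂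
  have hcomp : p.comp (-X) = (-1)^d * p₂ := by
    conv_lhs => rw [← hfact]
    rw [Polynomial.multiset_prod_comp, Multiset.map_map]
    have h9 : Multiset.map ((fun q : Polynomial ℝ => q.comp (-X)) ∘ fun a => X - C a) R
        = (R.map (fun a => X + C a)).map Neg.neg := by
      rw [Multiset.map_map]
      apply Multiset.map_congr rfl
      intro a _
      simp only [Function.comp_apply]
      rw [Polynomial.sub_comp, Polynomial.X_comp, Polynomial.C_comp]
      ring
    rw [h9, Multiset.prod_map_neg, Multiset.card_map, hcard, hp₂]
  have hp₂eq : p₂ = (-1)^p.natDegree * p.comp (-X) := by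
    rw [hd, hcomp, ← mul_assoc, ← pow_add]
    rw [Even.neg_one_pow ⟨d, by ring⟩, one_mul]
  have hflip : sv (coeffList p₂) = sv (alt (coeffList p)) := sv_coeffList_flip p hp₂eq hp0
  -- lower bound 2 : e ≤ sv (alt (coeffList p))
  have hlow2 : e ≤ sv (alt (coeffList p)) := by
    rw [← hflip]
    have hsplitN : N + R.filter (fun x => ¬ x < 0) = R := Multiset.filter_add_not _ R
    set q₂ := (((R.filter (fun x => ¬ x < 0)).map Neg.neg).map (fun a => X - C a)).prod with hq₂
    have hq₂m : q₂.Monic :=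
      Polynomial.monic_multiset_prod_of_monic _ _ (fun b _ => Polynomial.monic_X_sub_C b)
    have hfact2 : ((N.map Neg.neg).map (fun a => X - C a)).prod * q₂ = p₂ := by
      rw [hq₂, ← Multiset.prod_add, ← Multiset.map_add, ← Multiset.map_add, hsplitN, hp₂]
      rw [Multiset.map_map]
      congr 1
      apply Multiset.map_congr rfl
      intro a _
      simp [sub_neg_eq_add]
    have hNpos : ∀ b ∈ N.map Neg.neg, 0 < b := by
      intro b hb
      rcases Multiset.mem_map.mp hb with ⟨x, hx, rfl⟩
      have := (Multiset.mem_filter.mp hx).2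
      simpa using this
    have := card_le_sv_prod (N.map Neg.neg) hNpos q₂ hq₂m.ne_zero
    rw [hfact2, Multiset.card_map] at this
    omega
  -- upper bound
  have ⟨u, hu⟩ : (X : Polynomial ℝ)^k ∣ p := by
    have := Polynomial.pow_rootMultiplicity_dvd p 0
    simpa using this
  have hu0 : u ≠ 0 := by rintro rfl; rw [mul_zero] at hu; exact hp0 hu
  have huc : u.coeff 0 ≠ 0 := by
    intro hc
    rcases Polynomial.X_dvd_iff.mpr hc with ⟨v, hv⟩
    have : (X - C (0:ℝ))^(k+1) ∣ p := by
      simp only [map_zero, sub_zero]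
      exact ⟨v, by rw [hu, hv]; ring⟩
    exact Polynomial.pow_rootMultiplicity_not_dvd hp0 0 this
  have hdeg : d = k + u.natDegree := by
    rw [← hd, hu, natDegree_mul (pow_ne_zero _ Polynomial.X_ne_zero) hu0,
      Polynomial.natDegree_X_pow]
  have hclist : coeffList p = List.replicate k 0 ++ coeffList u := by
    rw [hu]; exact coeffList_X_pow_mul hu0 k
  have hupper : sv (coeffList p) + sv (alt (coeffList p)) ≤ u.natDegree := by
    rw [hclist, sv_replicate_append, sv_alt_replicate_append]
    have hcons := coeffList_cons u
    rw [hcons]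
    have := sv_add_sv_alt_le huc ((List.range u.natDegree).map (fun i => u.coeff (i+1)))
    simpa using this
  omega

end SVAux

theorem stmt_16 (p : Polynomial ℝ) (d : ℕ) (hd : p.natDegree = d)
    (hmonic : p.Monic) (hsplit : (p.map (RingHom.id ℝ)).Splits) :
    (p.roots.filter (fun x => 0 < x)).card = _root_.signVariations p := by
  rw [SVAux.signVariations_eq_sv p]
  exact SVAux.descartes p d hd hmonic hsplit
end
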